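/- arXiv:math/0612723 — 7 statements merged into one kernel-verified Lean document; each statement's English description precedes it below -/
import Mathlib

section
/- Let G be a finite group, N a normal subgroup of G, and A, B conjugacy classes of G. Suppose there exist a ∈ A and b ∈ B such that AB ⊆ ab·Z(N). Then [N,N] ⊆ C_N(A) ∩ C_N(B); in particular, the quotient N/C_N(A) is abelian. -/
open Pointwise
open scoped commutatorElement

/-- The conjugacy class of `a` in `G`. -/
def conjClass {G : Type*} [Group G] (a : G) : Set G := {x | ∃ g : G, g⁻¹ * a * g = x}

/-!
Let `Z = Z(N)`, a normal subgroup of `G`. Modulo `Z` the product `a' * b'` is constant on `A × B`,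
so `A` and `B` each lie in a single coset of `Z`. As `A` is closed under conjugation, for `c ∈ A`
we get `⁅c, g⁆ = c * (g c g⁻¹)⁻¹ ∈ Z` for every `g`: conjugation by `c` moves each `n ∈ N` only
by a central factor, `c n c⁻¹ = z n`, and such factors cancel in commutators of elements of `N`.
Hence `c` fixes `⁅x, y⁆` for `x, y ∈ N`.
-/

section
variable {G : Type*} [Group G]

theorem conj_mem_conjClass {x y : G} (hy : y ∈ conjClass x) (g : G) :
    g⁻¹ * y * g ∈ conjClass x := by
  obtain ⟨k, rfl⟩ := hy
  exact ⟨k * g, by group⟩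

theorem commutatorElement_mul_left_of_commute {u x w : G} (hx : Commute u x)
    (hw : Commute u w) :
    ⁅u * x, w⁆ = ⁅x, w⁆ := by
  have h : Commute u (x * w * x⁻¹) := (hx.mul_right hw).mul_right hx.inv_right
  calc ⁅u * x, w⁆ = u * (x * w * x⁻¹) * u⁻¹ * w⁻¹ := by rw [commutatorElement_def]; group
    _ = ⁅x, w⁆ := by rw [h.mul_inv_cancel, commutatorElement_def]

theorem commutatorElement_mul_right_of_commute {v y w : G} (hy : Commute v y)
    (hw : Commute v w) :
    ⁅w, v * y⁆ = ⁅w, y⁆ := by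
  rw [← commutatorElement_inv, commutatorElement_mul_left_of_commute hy hw, commutatorElement_inv]

theorem QuotientGroup.mk_eq_of_subset_singleton_mul {Z : Subgroup G} [Z.Normal] {s : Set G}
    {g x : G} (hs : s ⊆ {g} * (Z : Set G)) (hx : x ∈ s) : (x : G ⧸ Z) = g := by
  obtain ⟨_, rfl, z, hz, rfl⟩ := hs hx
  rw [QuotientGroup.mk_mul, (QuotientGroup.eq_one_iff z).mpr hz, mul_one]

theorem commutatorElement_mem_of_conjClass_mk_eq {Z : Subgroup G} [Z.Normal] {x c : G}
    {q : G ⧸ Z} (hq : ∀ c' ∈ conjClass x, (c' : G ⧸ Z) = q) (hc : c ∈ conjClass x) (g : G) :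
    ⁅c, g⁆ ∈ Z := by
  have hgc : g * c * g⁻¹ ∈ conjClass x := by simpa using conj_mem_conjClass hc g⁻¹
  rw [← QuotientGroup.eq_one_iff, commutatorElement_def,
    show c * g * c⁻¹ * g⁻¹ = c * (g * c * g⁻¹)⁻¹ by group, QuotientGroup.mk_mul,
    QuotientGroup.mk_inv, hq c hc, hq _ hgc, mul_inv_cancel]

namespace Subgroup

variable {N : Subgroup G}

theorem commute_of_mem_inf_centralizer {z m : G} (hz : z ∈ N ⊓ centralizer (N : Set G))
    (hm : m ∈ N) : Commute z m :=
  (mem_centralizer_iff.mp hz.2 m hm).symm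

theorem commutatorElement_mul_mul_of_mem_inf_centralizer {u v x y : G}
    (hu : u ∈ N ⊓ centralizer (N : Set G)) (hv : v ∈ N ⊓ centralizer (N : Set G))
    (hx : x ∈ N) (hy : y ∈ N) : ⁅u * x, v * y⁆ = ⁅x, y⁆ := by
  rw [commutatorElement_mul_left_of_commute (commute_of_mem_inf_centralizer hu hx)
      ((commute_of_mem_inf_centralizer hu hv.1).mul_right (commute_of_mem_inf_centralizer hu hy)),
    commutatorElement_mul_right_of_commute (commute_of_mem_inf_centralizer hv hy)
      (commute_of_mem_inf_centralizer hv hx)]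

theorem commute_commutatorElement_of_commutatorElement_mem {c x y : G}
    (hc : ∀ n ∈ N, ⁅c, n⁆ ∈ N ⊓ centralizer (N : Set G)) (hx : x ∈ N) (hy : y ∈ N) :
    Commute c ⁅x, y⁆ := by
  have hconj (n : G) : c * n * c⁻¹ = ⁅c, n⁆ * n := by rw [commutatorElement_def]; group
  have hfix : c * ⁅x, y⁆ * c⁻¹ = ⁅x, y⁆ := by
    rw [← MulAut.conj_apply, map_commutatorElement, MulAut.conj_apply, MulAut.conj_apply,
      hconj, hconj, commutatorElement_mul_mul_of_mem_inf_centralizer (hc x hx) (hc y hy) hx hy]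
  exact mul_inv_eq_iff_eq_mul.mp hfix

end Subgroup

end

theorem stmt1_general {G : Type*} [Group G] (N : Subgroup G) [N.Normal]
    (A B : Set G) (hA : ∃ x : G, A = conjClass x) (hB : ∃ x : G, B = conjClass x)
    (h : ∃ a ∈ A, ∃ b ∈ B,
      A * B ⊆ {a * b} * ((N ⊓ Subgroup.centralizer (N : Set G) : Subgroup G) : Set G)) :
    ⁅N, N⁆ ≤ (N ⊓ Subgroup.centralizer A) ⊓ (N ⊓ Subgroup.centralizer B) ∧
      ∀ x y : ↥N, (⁅(x : G), (y : G)⁆ : G) ∈ N ⊓ Subgroup.centralizer A := by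
  obtain ⟨a, ha, b, hb, hsub⟩ := h
  obtain ⟨xA, rfl⟩ := hA
  obtain ⟨xB, rfl⟩ := hB
  have hmk {a' b' : G} (ha' : a' ∈ conjClass xA) (hb' : b' ∈ conjClass xB) :
      (a' : G ⧸ N ⊓ Subgroup.centralizer (N : Set G)) * b' = a * b :=
    QuotientGroup.mk_eq_of_subset_singleton_mul hsub (Set.mul_mem_mul ha' hb')
  have hAZ : ∀ c ∈ conjClass xA, ∀ n ∈ N, ⁅c, n⁆ ∈ N ⊓ Subgroup.centralizer (N : Set G) :=
    fun c hc n _ ↦ commutatorElement_mem_of_conjClass_mk_eq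
      (fun _ ha' ↦ mul_right_cancel (hmk ha' hb)) hc n
  have hBZ : ∀ c ∈ conjClass xB, ∀ n ∈ N, ⁅c, n⁆ ∈ N ⊓ Subgroup.centralizer (N : Set G) :=
    fun c hc n _ ↦ commutatorElement_mem_of_conjClass_mk_eq
      (fun _ hb' ↦ mul_left_cancel (hmk ha hb')) hc n
  have hmem {x y : G} (hx : x ∈ N) (hy : y ∈ N) : ⁅x, y⁆ ∈
      (N ⊓ Subgroup.centralizer (conjClass xA)) ⊓ (N ⊓ Subgroup.centralizer (conjClass xB)) := by
    have hN : ⁅x, y⁆ ∈ N :=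
      Subgroup.commutator_le_left N N (Subgroup.commutator_mem_commutator hx hy)
    exact ⟨⟨hN, fun c hc ↦ Subgroup.commute_commutatorElement_of_commutatorElement_mem
        (hAZ c hc) hx hy⟩,
      ⟨hN, fun c hc ↦ Subgroup.commute_commutatorElement_of_commutatorElement_mem
        (hBZ c hc) hx hy⟩⟩
  exact ⟨Subgroup.commutator_le.mpr fun x hx y hy ↦ hmem hx hy, fun x y ↦ (hmem x.2 y.2).1⟩

/-- if `A`, `B` are conjugacy classes of a finite group `G`, `N ⊴ G`,
and there are `a ∈ A`, `b ∈ B` with `AB ⊆ ab·Z(N)`, then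
`[N,N] ⊆ C_N(A) ∩ C_N(B)`; in particular `N/C_N(A)` is abelian. -/
theorem stmt1 {G : Type*} [Group G] [Fintype G] (N : Subgroup G) [N.Normal]
    (A B : Set G) (hA : ∃ x : G, A = conjClass x) (hB : ∃ x : G, B = conjClass x)
    (h : ∃ a ∈ A, ∃ b ∈ B,
      A * B ⊆ {a * b} * ((N ⊓ Subgroup.centralizer (N : Set G) : Subgroup G) : Set G)) :
    ⁅N, N⁆ ≤ (N ⊓ Subgroup.centralizer A) ⊓ (N ⊓ Subgroup.centralizer B) ∧
      ∀ x y : ↥N, (⁅(x : G), (y : G)⁆ : G) ∈ N ⊓ Subgroup.centralizer A :=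
  stmt1_general N A B hA hB h
end

section
/- Let G be a finite group, N a normal subgroup of G, a ∈ G, and let C_N = {g ∈ G : [a,g] ∈ N}. Then η(ā^Ḡ (ā⁻¹)^Ḡ) + η((a^{C_N}(a⁻¹)^{C_N})^G) − 1 ≤ η(a^G (a⁻¹)^G), where Ḡ = G/N and ā = aN. -/
open Pointwise

/-- The number of distinct conjugacy classes of `G` meeting a set `X`
(for a `G`-invariant set `X`, the number of classes whose union is `X`). -/
noncomputable def eta {G : Type*} [Group G] (X : Set G) : ℕ :=
  ((fun x => conjClass x) '' X).ncard

/-- The closure of a set `S` under conjugation: `S^G`. -/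
def conjClosure {G : Type*} [Group G] (S : Set G) : Set G :=
  {y | ∃ x ∈ S, ∃ g : G, g⁻¹ * x * g = y}

theorem img_conjClass {G H : Type*} [Group G] [Group H] (f : G →* H)
    (hf : Function.Surjective f) (x : G) :
    f '' conjClass x = conjClass (f x) := by
  ext z
  constructor
  · rintro ⟨y, ⟨g, rfl⟩, rfl⟩
    exact ⟨f g, by simp [map_mul]⟩
  · rintro ⟨h, rfl⟩
    obtain ⟨g, rfl⟩ := hf h
    exact ⟨g⁻¹ * x * g, ⟨g, rfl⟩, by simp [map_mul]⟩

/-- with `C_N = {g : [a,g] ∈ N}`, one has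
`η(ā^Ḡ (ā⁻¹)^Ḡ) + η((a^{C_N}(a⁻¹)^{C_N})^G) − 1 ≤ η(a^G (a⁻¹)^G)`. -/
theorem stmt4 {G : Type*} [Group G] [Fintype G] (N : Subgroup G) [N.Normal] (a : G)
    (CN : Subgroup G) (hCN : ∀ g : G, g ∈ CN ↔ a⁻¹ * g⁻¹ * a * g ∈ N) :
    eta (conjClass ((a : G ⧸ N)) * conjClass ((a : G ⧸ N)⁻¹)) +
      eta (conjClosure (((fun h => h⁻¹ * a * h) '' (CN : Set G)) *
        ((fun h => h⁻¹ * a⁻¹ * h) '' (CN : Set G)))) - 1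
      ≤ eta (conjClass a * conjClass a⁻¹) := by
  classical
  set π : G →* G ⧸ N := QuotientGroup.mk' N with hπdef
  have hπs : Function.Surjective π := QuotientGroup.mk'_surjective N
  have hπa : π a = (a : G ⧸ N) := rfl
  set X : Set G := conjClass a * conjClass a⁻¹ with hXdef
  set Y : Set G := conjClosure (((fun h => h⁻¹ * a * h) '' (CN : Set G)) *
        ((fun h => h⁻¹ * a⁻¹ * h) '' (CN : Set G))) with hYdef
  set T : Set (Set G) := (fun x => conjClass x) '' X with hTdef
  set A : Set (Set (G ⧸ N)) :=
    (fun x => conjClass x) '' (conjClass ((a : G ⧸ N)) * conjClass ((a : G ⧸ N)⁻¹)) with hAdef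
  set B : Set (Set G) := (fun x => conjClass x) '' Y with hBdef
  set f : Set G → Set (G ⧸ N) := Set.image (π : G → G ⧸ N) with hfdef
  -- image of X in the quotient
  have hXimg : (π : G → G ⧸ N) '' X = conjClass ((a : G ⧸ N)) * conjClass ((a : G ⧸ N)⁻¹) := by
    rw [hXdef, Set.image_mul π, img_conjClass π hπs, img_conjClass π hπs]
    simp [hπa]
  -- Y ⊆ X
  have hYX : Y ⊆ X := by
    rintro y ⟨s, ⟨u, ⟨h, hh, rfl⟩, v, ⟨k, hk, rfl⟩, rfl⟩, g, rfl⟩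
    refine ⟨(h * g)⁻¹ * a * (h * g), ⟨h * g, rfl⟩,
      (k * g)⁻¹ * a⁻¹ * (k * g), ⟨k * g, rfl⟩, ?_⟩
    simp only [mul_inv_rev]
    group
  -- Y maps to 1 in the quotient
  have hYN : ∀ y ∈ Y, π y = 1 := by
    rintro y ⟨s, ⟨u, ⟨h, hh, rfl⟩, v, ⟨k, hk, rfl⟩, rfl⟩, g, rfl⟩
    have hh' : π ((h : G)⁻¹ * a * h) = π a := by
      have := (hCN h).1 hh
      have h1 : π (a⁻¹ * (h : G)⁻¹ * a * h) = 1 := (QuotientGroup.eq_one_iff _).2 this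
      have : π a⁻¹ * π ((h : G)⁻¹ * a * h) = 1 := by
        rw [← h1]; simp [map_mul, mul_assoc]
      calc π ((h : G)⁻¹ * a * h) = π a * (π a⁻¹ * π ((h : G)⁻¹ * a * h)) := by
            rw [← mul_assoc]; simp [map_mul]
        _ = π a := by rw [this, mul_one]
    have hk' : π ((k : G)⁻¹ * a⁻¹ * k) = π a⁻¹ := by
      have := (hCN k).1 hk
      have h1 : π (a⁻¹ * (k : G)⁻¹ * a * k) = 1 := (QuotientGroup.eq_one_iff _).2 this
      have h2 : π a⁻¹ * π ((k : G)⁻¹ * a * k) = 1 := by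
        rw [← h1]; simp [map_mul, mul_assoc]
      have h3 : π ((k : G)⁻¹ * a * k) = π a := by
        calc π ((k : G)⁻¹ * a * k) = π a * (π a⁻¹ * π ((k : G)⁻¹ * a * k)) := by
              rw [← mul_assoc]; simp [map_mul]
          _ = π a := by rw [h2, mul_one]
      have : π ((k : G)⁻¹ * a⁻¹ * k) = (π ((k : G)⁻¹ * a * k))⁻¹ := by
        simp [map_mul, mul_assoc]
      rw [this, h3]; simp
    have hs : π (((h:G)⁻¹ * a * h) * ((k:G)⁻¹ * a⁻¹ * k)) = 1 := by
      rw [map_mul, hh', hk']; simp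
    rw [map_mul, map_mul, hs]
    simp
  -- A is covered by f '' T
  have hAT : A ⊆ f '' T := by
    rintro C ⟨z, hz, rfl⟩
    rw [← hXimg] at hz
    obtain ⟨x, hx, rfl⟩ := hz
    refine ⟨conjClass x, ⟨x, hx, rfl⟩, ?_⟩
    exact img_conjClass π hπs x
  have hBT : B ⊆ T := by
    rintro C ⟨y, hy, rfl⟩
    exact ⟨y, hYX hy, rfl⟩
  have hBe : ∀ C ∈ B, f C = conjClass (1 : G ⧸ N) := by
    rintro C ⟨y, hy, rfl⟩
    have : f (conjClass y) = conjClass (π y) := img_conjClass π hπs y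
    rw [this, hYN y hy]
  -- the identity class is in A
  have heA : conjClass (1 : G ⧸ N) ∈ A := by
    refine ⟨1, ⟨(a : G ⧸ N), ⟨1, by group⟩, ((a : G ⧸ N))⁻¹, ⟨1, by group⟩, mul_inv_cancel _⟩, rfl⟩
  -- counting
  have hAsub : A ⊆ ({conjClass (1 : G ⧸ N)} : Set (Set (G ⧸ N))) ∪ f '' (T \ B) := by
    intro C hC
    obtain ⟨D, hD, rfl⟩ := hAT hC
    by_cases hDB : D ∈ B
    · exact Or.inl (by simp [hBe D hDB])
    · exact Or.inr ⟨D, ⟨hD, hDB⟩, rfl⟩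
  have h1 : A.ncard ≤ 1 + (T \ B).ncard := by
    calc A.ncard ≤ (({conjClass (1 : G ⧸ N)} : Set (Set (G ⧸ N))) ∪ f '' (T \ B)).ncard :=
          Set.ncard_le_ncard hAsub (Set.toFinite _)
      _ ≤ ({conjClass (1 : G ⧸ N)} : Set (Set (G ⧸ N))).ncard + (f '' (T \ B)).ncard :=
          Set.ncard_union_le _ _
      _ ≤ 1 + (T \ B).ncard := by
          simp only [Set.ncard_singleton]
          exact Nat.add_le_add_left (Set.ncard_image_le (Set.toFinite _)) 1
  have h2 : (T \ B).ncard = T.ncard - B.ncard := Set.ncard_diff hBT (Set.toFinite _)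
  have h3 : B.ncard ≤ T.ncard := Set.ncard_le_ncard hBT (Set.toFinite _)
  have hApos : 1 ≤ A.ncard := (Set.ncard_pos (Set.toFinite _)).2 ⟨_, heA⟩
  show A.ncard + B.ncard - 1 ≤ T.ncard
  omega
end

section
/- Let G be a finite group and H, K subgroups with K ⊆ H. Then the derived length of core_G(H)/core_G(K) is at most the derived length of H/core_H(K), where core_G(K) = ∩_{g∈G} K^g is the normal core. -/
theorem derivedSeries_char' (G : Type*) [Group G] (n : ℕ) :
    (derivedSeries G n).Characteristic := by
  induction n with
  | zero => rw [derivedSeries_zero]; infer_instance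
  | succ n ih =>
    rw [derivedSeries_succ]
    exact @Subgroup.commutator_characteristic G _ _ _ ih ih

/-- for subgroups `K ≤ H` of a finite group `G`,
`dl(core_G(H)/core_G(K)) ≤ dl(H/core_H(K))`, expressed via derived series:
if the derived series of `H/core_H(K)` terminates in `n` steps,
then so does that of `core_G(H)/core_G(K)`. -/
theorem stmt5 {G : Type*} [Group G] [Fintype G] (H K : Subgroup G) (hKH : K ≤ H) (n : ℕ)
    (h : derivedSeries (↥H ⧸ (K.subgroupOf H).normalCore) n = ⊥) :
    derivedSeries (↥H.normalCore ⧸ K.normalCore.subgroupOf H.normalCore) n = ⊥ := by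
  set N := H.normalCore with hN
  have h1 : derivedSeries ↥H n ≤ (K.subgroupOf H).normalCore := by
    rw [← map_derivedSeries_eq (QuotientGroup.mk'_surjective ((K.subgroupOf H).normalCore)) n,
      Subgroup.map_eq_bot_iff, QuotientGroup.ker_mk'] at h
    exact h
  -- the image of derivedSeries N n in G
  set D : Subgroup G := (derivedSeries ↥N n).map N.subtype with hD
  haveI : (derivedSeries ↥N n).Characteristic := derivedSeries_char' ↥N n
  haveI : D.Normal := ConjAct.normal_of_characteristic_of_normal
  have hDK : D ≤ K := by
    rintro x ⟨y, hy, rfl⟩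
    have hyH : (⟨(y : G), H.normalCore_le y.2⟩ : H) ∈ derivedSeries ↥H n := by
      have := map_derivedSeries_le_derivedSeries (Subgroup.inclusion H.normalCore_le) n
      exact this ⟨y, hy, rfl⟩
    have := (K.subgroupOf H).normalCore_le (h1 hyH)
    exact this
  have hDcore : D ≤ K.normalCore := Subgroup.normal_le_normalCore.mpr hDK
  have key : derivedSeries ↥N n ≤ K.normalCore.subgroupOf N := fun x hx =>
    hDcore ⟨x, hx, rfl⟩
  rw [← map_derivedSeries_eq (QuotientGroup.mk'_surjective (K.normalCore.subgroupOf N)) n,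
    Subgroup.map_eq_bot_iff, QuotientGroup.ker_mk']
  exact key
end

section
/- Let G be a finite solvable group, N an abelian normal subgroup of G, a ∈ G, C = C_G(a), and C_N = {g ∈ G : [a,g] ∈ N}. Then dl(C_N / core_{C_N}(C)) ≤ dl(C_N / (C_N ∩ C_G(N))) + 1. -/
/-!
Elements of `K = C_N ∩ C_G(N)` conjugate `a` to `a * u` with `u ∈ N`, and they fix `N`
pointwise; since `N` is abelian, `g * h` and `h * g` then conjugate `a` to the same element
for `g, h ∈ K`, so `[K, K] ≤ C_G(a)`. As `[K, K]` is normal in `C_N` it lies in the core of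
`C_G(a)`, and `C_N^(n) ≤ K` gives `C_N^(n+1) ≤ [K, K]`.
-/

/-- The centralizer of a normal subgroup is normal. -/
instance centralizer_normal_of_normal {G : Type*} [Group G] (N : Subgroup G) [hN : N.Normal] :
    (Subgroup.centralizer (N : Set G)).Normal := by
  constructor
  intro c hc g
  rw [Subgroup.mem_centralizer_iff] at hc ⊢
  intro h hh
  have hh' : g⁻¹ * h * g ∈ (N : Set G) := hN.conj_mem' h hh g
  have key := hc _ hh'
  calc h * (g * c * g⁻¹) = g * (g⁻¹ * h * g * c) * g⁻¹ := by group
    _ = g * (c * (g⁻¹ * h * g)) * g⁻¹ := by rw [key]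
    _ = g * c * g⁻¹ * h := by group

open scoped commutatorElement

theorem derivedSeries_quotient_eq_bot_iff {G : Type*} [Group G] (H : Subgroup G) [H.Normal]
    (n : ℕ) : derivedSeries (G ⧸ H) n = ⊥ ↔ derivedSeries G n ≤ H := by
  rw [← map_derivedSeries_eq (QuotientGroup.mk'_surjective H), Subgroup.map_eq_bot_iff,
    QuotientGroup.ker_mk']

theorem commute_commutatorElement_of_mem_centralizer {G : Type*} [Group G] {N : Subgroup G}
    (hN : ∀ x ∈ N, ∀ y ∈ N, x * y = y * x) {a g h : G}
    (hg : a⁻¹ * g⁻¹ * a * g ∈ N) (hh : a⁻¹ * h⁻¹ * a * h ∈ N)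
    (hgN : g ∈ Subgroup.centralizer (N : Set G)) (hhN : h ∈ Subgroup.centralizer (N : Set G)) :
    Commute a ⁅g, h⁆ := by
  generalize hu : a⁻¹ * g⁻¹ * a * g = u at hg
  generalize hv : a⁻¹ * h⁻¹ * a * h = v at hh
  have conj_g : g⁻¹ * a * g = a * u := by rw [← hu]; group
  have conj_h : h⁻¹ * a * h = a * v := by rw [← hv]; group
  have h_fixes_u : h⁻¹ * u * h = u := by
    rw [mul_assoc, Subgroup.mem_centralizer_iff.mp hhN u hg, inv_mul_cancel_left]
  have g_fixes_v : g⁻¹ * v * g = v := by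
    rw [mul_assoc, Subgroup.mem_centralizer_iff.mp hgN v hh, inv_mul_cancel_left]
  have same_conj : h⁻¹ * g⁻¹ * a * g * h = g⁻¹ * h⁻¹ * a * h * g :=
    calc h⁻¹ * g⁻¹ * a * g * h = h⁻¹ * (g⁻¹ * a * g) * h := by group
      _ = (h⁻¹ * a * h) * (h⁻¹ * u * h) := by rw [conj_g]; group
      _ = a * (v * u) := by rw [conj_h, h_fixes_u, mul_assoc]
      _ = a * (u * v) := by rw [hN v hh u hg]
      _ = (g⁻¹ * a * g) * (g⁻¹ * v * g) := by rw [conj_g, g_fixes_v, mul_assoc]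
      _ = g⁻¹ * (h⁻¹ * a * h) * g := by rw [conj_h]; group
      _ = g⁻¹ * h⁻¹ * a * h * g := by group
  calc a * ⁅g, h⁆ = (g * h) * (h⁻¹ * g⁻¹ * a * g * h) * (g⁻¹ * h⁻¹) := by
        rw [commutatorElement_def]; group
    _ = ⁅g, h⁆ * a := by rw [same_conj, commutatorElement_def]; group

theorem commutator_centralizer_subgroupOf_le_centralizer {G : Type*} [Group G] {N : Subgroup G}
    (hN : ∀ x ∈ N, ∀ y ∈ N, x * y = y * x) {a : G} {CN : Subgroup G}
    (hCN : ∀ g ∈ CN, a⁻¹ * g⁻¹ * a * g ∈ N) :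
    ⁅(Subgroup.centralizer (N : Set G)).subgroupOf CN,
      (Subgroup.centralizer (N : Set G)).subgroupOf CN⁆ ≤
      (Subgroup.centralizer {a}).subgroupOf CN := by
  rw [Subgroup.commutator_le]
  intro g hg h hh
  rw [Subgroup.mem_subgroupOf] at hg hh ⊢
  rw [Subgroup.mem_centralizer_singleton_iff]
  exact (commute_commutatorElement_of_mem_centralizer hN (hCN g g.2) (hCN h h.2) hg hh).symm

theorem stmt6_general {G : Type*} [Group G]
    (N : Subgroup G) [N.Normal] (habelian : ∀ x ∈ N, ∀ y ∈ N, x * y = y * x) (a : G)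
    (CN : Subgroup G) (hCN : ∀ g : G, g ∈ CN ↔ a⁻¹ * g⁻¹ * a * g ∈ N) (n : ℕ)
    (h : derivedSeries (↥CN ⧸ (Subgroup.centralizer (N : Set G)).subgroupOf CN) n = ⊥) :
    derivedSeries (↥CN ⧸ ((Subgroup.centralizer {a}).subgroupOf CN).normalCore) (n + 1) = ⊥ := by
  rw [derivedSeries_quotient_eq_bot_iff] at h ⊢
  rw [derivedSeries_succ]
  exact (Subgroup.commutator_mono h h).trans <| Subgroup.normal_le_normalCore.mpr <|
    commutator_centralizer_subgroupOf_le_centralizer habelian fun g hg => (hCN g).mp hg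

/-- `G` finite solvable, `N` abelian normal, `a ∈ G`, `C = C_G(a)`,
`C_N = {g : [a,g] ∈ N}`. Then `dl(C_N/core_{C_N}(C)) ≤ dl(C_N/(C_N ∩ C_G(N))) + 1`,
expressed via derived series. Note `(C_N ∩ C_G(N))` as a subgroup of `C_N` is
`(C_G(N)).subgroupOf C_N`. -/
theorem stmt6 {G : Type*} [Group G] [Fintype G] (hG : IsSolvable G)
    (N : Subgroup G) [N.Normal] (habelian : ∀ x ∈ N, ∀ y ∈ N, x * y = y * x) (a : G)
    (CN : Subgroup G) (hCN : ∀ g : G, g ∈ CN ↔ a⁻¹ * g⁻¹ * a * g ∈ N) (n : ℕ)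
    (h : derivedSeries (↥CN ⧸ (Subgroup.centralizer (N : Set G)).subgroupOf CN) n = ⊥) :
    derivedSeries (↥CN ⧸ ((Subgroup.centralizer {a}).subgroupOf CN).normalCore) (n + 1) = ⊥ :=
  stmt6_general N habelian a CN hCN n h
end

section
/- Let G be a finite group, N a minimal normal subgroup (chief factor) of G, and a ∈ G. If η(ā^Ḡ (ā⁻¹)^Ḡ) = η(a^G (a⁻¹)^G), where Ḡ = G/N, then N ⊆ C_G(a) and C_G(a) = {g ∈ G : [a,g] ∈ N}; in particular dl(G/core_G(C_G(a))) = dl(Ḡ/core_Ḡ(C_Ḡ(ā))). -/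
open Pointwise

lemma mem_conjClass_self {G : Type*} [Group G] (a : G) : a ∈ conjClass a :=
  ⟨1, by group⟩

lemma conjClass_one {G : Type*} [Group G] : conjClass (1 : G) = {1} := by
  ext x
  constructor
  · rintro ⟨g, rfl⟩; simp
  · rintro rfl; exact mem_conjClass_self 1

lemma image_conjClass {G H : Type*} [Group G] [Group H] (π : G →* H)
    (hs : Function.Surjective π) (x : G) : conjClass (π x) = π '' conjClass x := by
  ext y
  constructor
  · rintro ⟨g, rfl⟩
    obtain ⟨g', rfl⟩ := hs g
    exact ⟨g'⁻¹ * x * g', ⟨g', rfl⟩, by simp⟩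
  · rintro ⟨z, ⟨g, rfl⟩, rfl⟩
    exact ⟨π g, by simp⟩

lemma conj_mem_prod {G : Type*} [Group G] {a b s : G}
    (hs : s ∈ conjClass a * conjClass b) (g : G) :
    g⁻¹ * s * g ∈ conjClass a * conjClass b := by
  obtain ⟨u, ⟨x, rfl⟩, v, ⟨y, rfl⟩, rfl⟩ := hs
  exact ⟨(x * g)⁻¹ * a * (x * g), ⟨x * g, rfl⟩, (y * g)⁻¹ * b * (y * g), ⟨y * g, rfl⟩, by group⟩

lemma commute_iff_comm_one {G : Type*} [Group G] (a b : G) :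
    a * b = b * a ↔ a⁻¹ * b⁻¹ * a * b = 1 := by
  have : a⁻¹ * b⁻¹ * a * b = (b * a)⁻¹ * (a * b) := by group
  rw [this, inv_mul_eq_one, eq_comm]

/-- `N` a minimal normal subgroup of the finite group `G`, `a ∈ G`.
If `η(ā^Ḡ (ā⁻¹)^Ḡ) = η(a^G (a⁻¹)^G)` then `N ⊆ C_G(a)`,
`C_G(a) = {g : [a,g] ∈ N}`, and
`dl(G/core_G(C_G(a))) = dl(Ḡ/core_Ḡ(C_Ḡ(ā)))`. -/
theorem stmt8 {G : Type*} [Group G] [Fintype G] (N : Subgroup G) [N.Normal]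
    (hne : N ≠ ⊥) (hmin : ∀ M : Subgroup G, M.Normal → M ≤ N → M = ⊥ ∨ M = N) (a : G)
    (h : eta (conjClass ((a : G ⧸ N)) * conjClass ((a : G ⧸ N)⁻¹)) =
      eta (conjClass a * conjClass a⁻¹)) :
    N ≤ Subgroup.centralizer {a} ∧
    (Subgroup.centralizer {a} : Set G) = {g : G | a⁻¹ * g⁻¹ * a * g ∈ N} ∧
    ∀ n : ℕ,
      derivedSeries (G ⧸ (Subgroup.centralizer {a}).normalCore) n = ⊥ ↔
      derivedSeries ((G ⧸ N) ⧸ (Subgroup.centralizer {((a : G ⧸ N))}).normalCore) n = ⊥ := by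
  classical
  set π : G →* G ⧸ N := QuotientGroup.mk' N with hπdef
  have hπ : Function.Surjective π := QuotientGroup.mk'_surjective N
  set S : Set G := conjClass a * conjClass a⁻¹ with hS
  set F : Set (Set G) := (fun x => conjClass x) '' S with hF
  have hπa : (a : G ⧸ N) = π a := rfl
  -- the image set
  have himS : (π : G → G ⧸ N) '' S = conjClass ((a : G ⧸ N)) * conjClass ((a : G ⧸ N)⁻¹) := by
    rw [hS, Set.image_mul, hπa, image_conjClass π hπ, ← map_inv π,
      image_conjClass π hπ]
  have himF : (fun K => (π : G → G ⧸ N) '' K) '' F =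
      (fun x => conjClass x) '' (conjClass ((a : G ⧸ N)) * conjClass ((a : G ⧸ N)⁻¹)) := by
    rw [← himS, hF, Set.image_image, ← Set.image_comp]
    refine Set.image_congr fun x _ => ?_
    exact (image_conjClass π hπ x).symm
  -- injectivity of taking image mod N on classes
  have hcard : ((fun K => (π : G → G ⧸ N) '' K) '' F).ncard = F.ncard := by
    rw [himF]
    exact h
  have hinj : Set.InjOn (fun K => (π : G → G ⧸ N) '' K) F :=
    Set.injOn_of_ncard_image_eq hcard (Set.toFinite F)
  -- the key claim: S ∩ N = {1}
  have hone : (1 : G) ∈ S := ⟨a, mem_conjClass_self a, a⁻¹, mem_conjClass_self a⁻¹, by group⟩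
  have key : ∀ x ∈ S, x ∈ N → x = 1 := by
    intro x hxS hxN
    have h1 : conjClass x ∈ F := ⟨x, hxS, rfl⟩
    have h2 : conjClass (1 : G) ∈ F := ⟨1, hone, rfl⟩
    have hπx : π x = 1 := (QuotientGroup.eq_one_iff x).2 hxN
    have heqim : (π : G → G ⧸ N) '' conjClass x = (π : G → G ⧸ N) '' conjClass (1 : G) := by
      rw [← image_conjClass π hπ, ← image_conjClass π hπ, hπx, map_one]
    have := hinj h1 h2 heqim
    have hx : x ∈ conjClass (1 : G) := this ▸ mem_conjClass_self x
    rw [conjClass_one] at hx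
    exact hx
  -- part 1
  have part1 : N ≤ Subgroup.centralizer {a} := by
    intro n hn
    rw [Subgroup.mem_centralizer_iff]
    intro b hb
    rcases hb with rfl
    have hcS : n⁻¹ * b * n * b⁻¹ ∈ S := by
      refine ⟨n⁻¹ * b * n, ⟨n, rfl⟩, b⁻¹, mem_conjClass_self b⁻¹, by group⟩
    have hcN : n⁻¹ * b * n * b⁻¹ ∈ N := by
      have h1 : b * n * b⁻¹ ∈ N := by
        have := Subgroup.Normal.conj_mem ‹N.Normal› n hn b
        simpa [mul_assoc] using this
      have := N.mul_mem (N.inv_mem hn) h1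
      simpa [mul_assoc] using this
    have := key _ hcS hcN
    have hb : n⁻¹ * b * n = b := by
      have := congrArg (· * b) this
      simpa [mul_assoc] using this
    calc b * n = n * (n⁻¹ * b * n) := by group
    _ = n * b := by rw [hb]
  -- part 2
  have part2 : (Subgroup.centralizer {a} : Set G) = {g : G | a⁻¹ * g⁻¹ * a * g ∈ N} := by
    ext g
    simp only [SetLike.mem_coe, Subgroup.mem_centralizer_iff, Set.mem_singleton_iff,
      Set.mem_setOf_eq, forall_eq]
    constructor
    · intro hg
      have : a⁻¹ * g⁻¹ * a * g = 1 := (commute_iff_comm_one a g).1 hg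
      rw [this]; exact N.one_mem
    · intro hg
      have hcS : g⁻¹ * a * g * a⁻¹ ∈ S :=
        ⟨g⁻¹ * a * g, ⟨g, rfl⟩, a⁻¹, mem_conjClass_self a⁻¹, rfl⟩
      have hcN : g⁻¹ * a * g * a⁻¹ ∈ N := by
        have := Subgroup.Normal.conj_mem ‹N.Normal› _ hg a
        have h2 : a * (a⁻¹ * g⁻¹ * a * g) * a⁻¹ = g⁻¹ * a * g * a⁻¹ := by group
        rwa [h2] at this
      have := key _ hcS hcN
      have : g⁻¹ * a * g = a := by
        have := congrArg (· * a) this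
        simpa [mul_assoc] using this
      rw [commute_iff_comm_one]
      calc a⁻¹ * g⁻¹ * a * g = a⁻¹ * (g⁻¹ * a * g) := by group
      _ = 1 := by rw [this]; group
  refine ⟨part1, part2, ?_⟩
  -- part 3
  set C : Subgroup G := Subgroup.centralizer {a} with hC
  set Cb : Subgroup (G ⧸ N) := Subgroup.centralizer {(a : G ⧸ N)} with hCb
  have hcomap : Subgroup.comap π Cb = C := by
    ext g
    rw [Subgroup.mem_comap, hCb, Subgroup.mem_centralizer_iff]
    simp only [Set.mem_singleton_iff, forall_eq]
    rw [commute_iff_comm_one]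
    have h1 : (a : G ⧸ N)⁻¹ * (π g)⁻¹ * (a : G ⧸ N) * π g = π (a⁻¹ * g⁻¹ * a * g) := by
      rw [hπa]; simp
    have h2 : π (a⁻¹ * g⁻¹ * a * g) = 1 ↔ a⁻¹ * g⁻¹ * a * g ∈ N :=
      QuotientGroup.eq_one_iff _
    rw [h1, h2]
    have := Set.ext_iff.1 part2 g
    simp only [Set.mem_setOf_eq] at this
    exact this.symm
  have hcoreeq : Subgroup.comap π Cb.normalCore = C.normalCore := by
    apply le_antisymm
    · haveI : (Subgroup.comap π Cb.normalCore).Normal :=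
        Subgroup.Normal.comap inferInstance π
      refine Subgroup.normal_le_normalCore.2 ?_
      rw [← hcomap]
      exact Subgroup.comap_mono Cb.normalCore_le
    · have hmap : Subgroup.map π C.normalCore ≤ Cb.normalCore := by
        haveI : (Subgroup.map π C.normalCore).Normal :=
          Subgroup.Normal.map inferInstance π hπ
        refine Subgroup.normal_le_normalCore.2 ?_
        calc Subgroup.map π C.normalCore ≤ Subgroup.map π C :=
              Subgroup.map_mono C.normalCore_le
          _ = Subgroup.map π (Subgroup.comap π Cb) := by rw [hcomap]
          _ ≤ Cb := Subgroup.map_comap_le π Cb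
      exact (Subgroup.le_comap_map π C.normalCore).trans (Subgroup.comap_mono hmap)
  set φ : G →* (G ⧸ N) ⧸ Cb.normalCore := (QuotientGroup.mk' Cb.normalCore).comp π with hφ
  have hφsurj : Function.Surjective φ :=
    (QuotientGroup.mk'_surjective _).comp hπ
  have hker : φ.ker = C.normalCore := by
    rw [hφ, ← MonoidHom.comap_ker, QuotientGroup.ker_mk']
    exact hcoreeq
  let e : (G ⧸ C.normalCore) ≃* ((G ⧸ N) ⧸ Cb.normalCore) :=
    (QuotientGroup.quotientMulEquivOfEq hker.symm).trans
      (QuotientGroup.quotientKerEquivOfSurjective φ hφsurj)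
  intro n
  have hmapd := map_derivedSeries_eq (f := e.toMonoidHom) e.surjective n
  constructor
  · intro hb
    rw [← hmapd, hb]
    exact Subgroup.map_bot _
  · intro hb
    rw [← hmapd, Subgroup.map_eq_bot_iff_of_injective _ e.injective] at hb
    exact hb
end

section
/- For any finite supersolvable group G and any conjugacy class A of G, the derived length of G/C_G(A) is at most 2·η(AA⁻¹) − 1, where A⁻¹ = {a⁻¹ : a ∈ A} and η(AA⁻¹) is the number of distinct conjugacy classes of G whose union is AA⁻¹. -/
/-!
Induct on `|G|`. A nontrivial supersolvable `G` has a nontrivial cyclic normal subgroup `M`, and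
the theorem for `G/M` says that the `(2η(π(AA⁻¹)) - 1)`-st derived subgroup `K` of `G` satisfies
`⁅k, x⁆ ∈ M` for `k ∈ K`, `x ∈ A`. These commutators also lie in `AA⁻¹`, so if `M ∩ AA⁻¹ = 1`
then `K` already centralizes `A`. Otherwise `π` merges a nontrivial class of `AA⁻¹` with `1`, so
`η` drops by one and two more derived steps are available: `Aut(M)` is abelian, so `K'`
centralizes `M`, and then elements of `K'` act on each `x ∈ A` by left multiplication with
commuting elements of `M`, so `K''` centralizes `A`.
-/

open Pointwise

/-- A group is supersolvable if it has a normal series with all terms normal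
in the whole group and all factors cyclic. -/
def IsSupersolvable (G : Type*) [Group G] : Prop :=
  ∃ (n : ℕ) (s : Fin (n + 1) → Subgroup G),
    s 0 = ⊥ ∧ s (Fin.last n) = ⊤ ∧
    ∃ _ : ∀ i, (s i).Normal,
      ∀ i : Fin n, s i.castSucc ≤ s i.succ ∧
        IsCyclic (↥(s i.succ) ⧸ (s i.castSucc).subgroupOf (s i.succ))

open scoped commutatorElement
open Subgroup

section ConjClass
variable {G H : Type*} [Group G] [Group H]

lemma conjClass_eq_carrier_mk (a : G) : conjClass a = (ConjClasses.mk a).carrier := by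
  ext x
  rw [ConjClasses.mem_carrier_iff_mk_eq, ConjClasses.mk_eq_mk_iff_isConj, isConj_comm, isConj_iff]
  exact ⟨fun ⟨g, hg⟩ => ⟨g⁻¹, by simpa using hg⟩, fun ⟨g, hg⟩ => ⟨g⁻¹, by simpa using hg⟩⟩

lemma conjClass_map_of_surjective {f : G →* H} (hf : Function.Surjective f) (a : G) :
    conjClass (f a) = f '' conjClass a := by
  ext y
  constructor
  · rintro ⟨h, rfl⟩
    obtain ⟨g, rfl⟩ := hf h
    exact ⟨g⁻¹ * a * g, ⟨g, rfl⟩, by simp⟩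
  · rintro ⟨x, ⟨g, rfl⟩, rfl⟩
    exact ⟨f g, by simp⟩

lemma commutatorElement_mem_conjClass_mul_inv {a x : G} (hx : x ∈ conjClass a) (g : G) :
    ⁅g, x⁆ ∈ conjClass a * (conjClass a)⁻¹ := by
  obtain ⟨h, rfl⟩ := hx
  exact ⟨g * (h⁻¹ * a * h) * g⁻¹, ⟨h * g⁻¹, by group⟩, (h⁻¹ * a * h)⁻¹, by simp [conjClass],
    by rw [commutatorElement_def]⟩

lemma conjClass_mul_inv_map_of_surjective {f : G →* H} (hf : Function.Surjective f) (a : G) :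
    conjClass (f a) * (conjClass (f a))⁻¹ = f '' (conjClass a * (conjClass a)⁻¹) := by
  rw [Set.image_mul, Set.image_inv, conjClass_map_of_surjective hf]

lemma eta_eq_ncard_image_mk (X : Set G) : eta X = (ConjClasses.mk '' X).ncard := by
  have hinj : Function.Injective (ConjClasses.carrier : ConjClasses G → Set G) := by
    intro c d h
    obtain ⟨a, rfl⟩ := ConjClasses.mk_surjective c
    exact ConjClasses.mem_carrier_iff_mk_eq.mp (h ▸ ConjClasses.mem_carrier_mk)
  rw [eta, ← hinj.injOn.ncard_image, Set.image_image]
  simp only [conjClass_eq_carrier_mk]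

lemma ConjClasses.mk_image_image (f : G →* H) (X : Set G) :
    ConjClasses.mk '' (f '' X) = ConjClasses.map f '' (ConjClasses.mk '' X) := by
  rw [Set.image_image, Set.image_image]
  rfl

variable [Finite G]

lemma eta_image_le (f : G →* H) (X : Set G) : eta (f '' X) ≤ eta X := by
  rw [eta_eq_ncard_image_mk, eta_eq_ncard_image_mk, ConjClasses.mk_image_image]
  exact Set.ncard_image_le

lemma eta_image_lt (f : G →* H) {X : Set G} {x y : G} (hx : x ∈ X) (hy : y ∈ X)
    (hxy : ¬IsConj x y) (hf : f x = f y) : eta (f '' X) < eta X := by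
  rw [eta_eq_ncard_image_mk, eta_eq_ncard_image_mk, ConjClasses.mk_image_image]
  refine lt_of_le_of_ne Set.ncard_image_le fun h => hxy ?_
  rw [← ConjClasses.mk_eq_mk_iff_isConj]
  exact Set.injOn_of_ncard_image_eq h (Set.toFinite _) ⟨x, hx, rfl⟩ ⟨y, hy, rfl⟩
    (congrArg ConjClasses.mk hf)

lemma eta_pos {X : Set G} (hX : X.Nonempty) : 0 < eta X := by
  rw [eta_eq_ncard_image_mk]
  exact (Set.ncard_pos).mpr (hX.image _)

end ConjClass

namespace IsSupersolvable
variable {G H : Type*} [Group G] [Group H]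

lemma of_surjective (hG : IsSupersolvable G) {f : G →* H} (hf : Function.Surjective f) :
    IsSupersolvable H := by
  obtain ⟨n, s, h0, hlast, hnormal, hstep⟩ := hG
  have hnormal' : ∀ i, ((s i).map f).Normal := fun i => (hnormal i).map f hf
  refine ⟨n, fun i => (s i).map f, by simp [h0], by simp [hlast, map_top_of_surjective f hf],
    ⟨hnormal', fun i => ⟨map_mono (hstep i).1, ?_⟩⟩⟩
  have hcyc := (hstep i).2
  let φ : s i.succ →* (s i.succ).map f := f.subgroupMap _
  have hφ : (s i.castSucc).subgroupOf (s i.succ) ≤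
      (((s i.castSucc).map f).subgroupOf ((s i.succ).map f)).comap φ :=
    fun x hx => ⟨x, hx, rfl⟩
  refine isCyclic_of_surjective (QuotientGroup.map _ _ φ hφ) fun y => ?_
  obtain ⟨z, rfl⟩ := QuotientGroup.mk_surjective y
  obtain ⟨w, rfl⟩ := f.subgroupMap_surjective _ z
  exact ⟨w, rfl⟩

lemma exists_normal_isCyclic_ne_bot [Nontrivial G] (hG : IsSupersolvable G) :
    ∃ M : Subgroup G, M.Normal ∧ IsCyclic M ∧ M ≠ ⊥ := by
  obtain ⟨n, s, h0, hlast, hnormal, hstep⟩ := hG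
  by_contra! hnone
  -- the first nontrivial term of the series would be such an `M`
  have hbot : ∀ i, s i = ⊥ := by
    intro i
    induction i using Fin.induction with
    | zero => exact h0
    | succ i ih =>
      have hcyc := (hstep i).2
      have hquot : (s i.castSucc).subgroupOf (s i.succ) = ⊥ := by rw [ih, bot_subgroupOf]
      let e := (QuotientGroup.quotientMulEquivOfEq hquot).trans QuotientGroup.quotientBot
      exact hnone _ (hnormal _) (isCyclic_of_surjective e e.surjective)
  obtain ⟨x, hx⟩ := exists_ne (1 : G)
  exact hx (mem_bot.mp (hbot (Fin.last n) ▸ hlast ▸ mem_top x))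

end IsSupersolvable

section Centralizer
variable {G : Type*} [Group G]

lemma commutator_le_centralizer_of_isCyclic (M : Subgroup G) [M.Normal] [IsCyclic M] :
    commutator G ≤ centralizer (M : Set G) := by
  -- `Aut(M) ≃ (ZMod |M|)ˣ` is abelian, so commutators act trivially on `M` by conjugation
  let ρ : G →* (ZMod (Nat.card M))ˣ :=
    (IsCyclic.mulAutMulEquiv M).toMonoidHom.comp MulAut.conjNormal
  intro g hg
  rw [mem_centralizer_iff]
  intro m hm
  have hρ : MulAut.conjNormal g = 1 := (IsCyclic.mulAutMulEquiv M).injective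
    ((Abelianization.commutator_subset_ker ρ hg).trans (map_one _).symm)
  have hgm : g * m * g⁻¹ = m := by
    simpa using congrArg Subtype.val (DFunLike.congr_fun hρ ⟨m, hm⟩)
  calc m * g = g * m * g⁻¹ * g := by rw [hgm]
    _ = g * m := by group

lemma commutator_le_centralizer_of_commutatorElement_mem {M K : Subgroup G} [IsMulCommutative M]
    {S : Set G} (hKM : K ≤ centralizer (M : Set G)) (hKS : ∀ k ∈ K, ∀ x ∈ S, ⁅k, x⁆ ∈ M) :
    ⁅K, K⁆ ≤ centralizer S := by
  rw [commutator_le]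
  intro k hk l hl
  rw [mem_centralizer_iff]
  intro x hx
  -- each `u ∈ K` moves `x` to `⁅u, x⁆ * x`, and these left factors commute with `K` and each other
  have hconj : ∀ {u v}, u ∈ K → v ∈ K → (u * v) * x * (u * v)⁻¹ = ⁅v, x⁆ * ⁅u, x⁆ * x := by
    intro u v hu hv
    have hcomm : ⁅v, x⁆ * u = u * ⁅v, x⁆ := mem_centralizer_iff.mp (hKM hu) _ (hKS v hv x hx)
    calc (u * v) * x * (u * v)⁻¹ = u * ⁅v, x⁆ * u⁻¹ * (u * x * u⁻¹) := by
          rw [commutatorElement_def]; group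
      _ = ⁅v, x⁆ * ⁅u, x⁆ * x := by rw [← hcomm, commutatorElement_def]; group
  have hsame : (k⁻¹ * l⁻¹) * x * (k⁻¹ * l⁻¹)⁻¹ = (l⁻¹ * k⁻¹) * x * (l⁻¹ * k⁻¹)⁻¹ := by
    rw [hconj (inv_mem hk) (inv_mem hl), hconj (inv_mem hl) (inv_mem hk),
      setLike_mul_comm (hKS _ (inv_mem hl) x hx) (hKS _ (inv_mem hk) x hx)]
  calc x * ⁅k, l⁆ = (l⁻¹ * k⁻¹)⁻¹ * ((l⁻¹ * k⁻¹) * x * (l⁻¹ * k⁻¹)⁻¹) * (k⁻¹ * l⁻¹) := by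
        rw [commutatorElement_def]; group
    _ = ⁅k, l⁆ * x := by rw [← hsame, commutatorElement_def]; group

end Centralizer

section Quotient
variable {G : Type*} [Group G] (M : Subgroup G) [M.Normal]

lemma commutatorElement_mem_of_derivedSeries_le {a : G} {n : ℕ}
    (h : derivedSeries (G ⧸ M) n ≤ centralizer (conjClass (a : G ⧸ M)))
    {g x : G} (hg : g ∈ derivedSeries G n) (hx : x ∈ conjClass a) : ⁅g, x⁆ ∈ M := by
  have hgx : (x : G ⧸ M) * g = g * x :=
    mem_centralizer_iff.mp (h (map_derivedSeries_le_derivedSeries (QuotientGroup.mk' M) n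
      ⟨g, hg, rfl⟩)) x (by obtain ⟨c, rfl⟩ := hx; exact ⟨c, rfl⟩)
  rw [← QuotientGroup.eq_one_iff, ← QuotientGroup.mk'_apply, map_commutatorElement,
    commutatorElement_eq_one_iff_mul_comm]
  exact hgx.symm

lemma derivedSeries_le_centralizer_of_inter_subset_one {a : G} {n : ℕ}
    (hX : (M : Set G) ∩ (conjClass a * (conjClass a)⁻¹) ⊆ {1})
    (h : derivedSeries (G ⧸ M) n ≤ centralizer (conjClass (a : G ⧸ M))) :
    derivedSeries G n ≤ centralizer (conjClass a) := by
  intro g hg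
  rw [mem_centralizer_iff]
  intro x hx
  have hgx : ⁅g, x⁆ = 1 := hX ⟨commutatorElement_mem_of_derivedSeries_le M h hg hx,
    commutatorElement_mem_conjClass_mul_inv hx g⟩
  rw [commutatorElement_eq_one_iff_mul_comm] at hgx
  exact hgx.symm

lemma derivedSeries_add_two_le_centralizer_conjClass [IsCyclic M] {a : G} {n : ℕ}
    (h : derivedSeries (G ⧸ M) n ≤ centralizer (conjClass (a : G ⧸ M))) :
    derivedSeries G (n + 2) ≤ centralizer (conjClass a) := by
  refine commutator_le_centralizer_of_commutatorElement_mem (M := M) ?_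
    fun k hk x hx => commutatorElement_mem_of_derivedSeries_le M h
      (derivedSeries_antitone G n.le_succ hk) hx
  calc derivedSeries G (n + 1) ≤ derivedSeries G 1 := derivedSeries_antitone G (by omega)
    _ = commutator G := derivedSeries_one G
    _ ≤ centralizer (M : Set G) := commutator_le_centralizer_of_isCyclic M

end Quotient

lemma Subgroup.card_quotient_lt {G : Type*} [Group G] [Finite G] {M : Subgroup G} [M.Normal]
    (hM : M ≠ ⊥) : Nat.card (G ⧸ M) < Nat.card G := by
  rw [card_eq_card_quotient_mul_card_subgroup M]
  exact lt_mul_of_one_lt_right Nat.card_pos ((one_lt_card_iff_ne_bot M).mpr hM)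

theorem IsSupersolvable.derivedSeries_le_centralizer_conjClass {G : Type*} [Group G] [Finite G]
    (hG : IsSupersolvable G) (a : G) :
    derivedSeries G (2 * eta (conjClass a * (conjClass a)⁻¹) - 1) ≤
      centralizer (conjClass a) := by
  induction hcard : Nat.card G using Nat.strong_induction_on generalizing G with
  | _ N ih =>
  subst hcard
  rcases subsingleton_or_nontrivial G with hG1 | hG1
  · exact fun g _ => mem_centralizer_iff.mpr fun x _ => Subsingleton.elim _ _
  obtain ⟨M, hMnormal, hMcyclic, hM⟩ := hG.exists_normal_isCyclic_ne_bot
  have hmk := QuotientGroup.mk'_surjective M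
  have ihM := ih _ (card_quotient_lt hM) (hG.of_surjective hmk) (a : G ⧸ M) rfl
  rw [← QuotientGroup.mk'_apply, conjClass_mul_inv_map_of_surjective hmk] at ihM
  set X := conjClass a * (conjClass a)⁻¹
  by_cases hX : (M : Set G) ∩ X ⊆ {1}
  · exact (derivedSeries_antitone G (by grind [eta_image_le (QuotientGroup.mk' M) X])).trans
      (derivedSeries_le_centralizer_of_inter_subset_one M hX ihM)
  · obtain ⟨m, ⟨hmM, hmX⟩, hm1⟩ := Set.not_subset.mp hX
    have hone : (1 : G) ∈ X := ⟨a, ⟨1, by group⟩, a⁻¹, ⟨1, by group⟩, mul_inv_cancel a⟩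
    have hlt := eta_image_lt (QuotientGroup.mk' M) hmX hone (by rwa [isConj_one_left])
      (by rwa [map_one, QuotientGroup.mk'_apply, QuotientGroup.eq_one_iff])
    have hpos := eta_pos (Set.Nonempty.image (QuotientGroup.mk' M) ⟨1, hone⟩)
    exact (derivedSeries_antitone G (by omega)).trans
      (derivedSeries_add_two_le_centralizer_conjClass M ihM)

/-- Theorem B: for a finite supersolvable group `G` and a conjugacy class
`A` of `G`, `dl(G/C_G(A)) ≤ 2·η(AA⁻¹) − 1`; equivalently the `(2η(AA⁻¹)−1)`-st term
of the derived series of `G` is contained in `C_G(A)`. -/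
theorem stmt9 {G : Type*} [Group G] [Fintype G] (hG : IsSupersolvable G) (a : G) :
    derivedSeries G (2 * eta (conjClass a * (conjClass a)⁻¹) - 1) ≤
      Subgroup.centralizer (conjClass a) :=
  hG.derivedSeries_le_centralizer_conjClass a
end

section
/- Let G be an extraspecial group of exponent p and order p³ for an odd prime p, let a ∈ G \ Z(G), and let H = C_G(a). Then η(a^H (a⁻¹)^H) = 1 while η(a^G (a⁻¹)^G) = p. Hence for a subgroup H with C_G(a) ⊆ H ⊆ G, it need not hold that η(a^G (a⁻¹)^G) ≤ η(a^H (a⁻¹)^H). -/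
/-!
When the commutator subgroup is central, `g ↦ ⁅c, g⁆` is a homomorphism `G → Z(G)`. For
`c ∉ Z(G)` it is nontrivial, hence onto when `|Z(G)|` is prime, so the `G`-class of a
noncentral `a` is the whole coset `a Z(G)` and `a^G (a⁻¹)^G = Z(G)` splits into `p` central
classes. Inside `C_G(a)`, on the other hand, `a` and `a⁻¹` are their own classes, with
product `{1}`.
-/

open Pointwise

/-- The conjugation orbit of `a` under a subgroup `H`: `a^H`. -/
def subConjClass {G : Type*} [Group G] (H : Subgroup G) (a : G) : Set G :=
  (fun h => h⁻¹ * a * h) '' (H : Set G)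

/-- The number of distinct `H`-conjugacy classes meeting a set `X ⊆ G`. -/
noncomputable def etaIn {G : Type*} [Group G] (H : Subgroup G) (X : Set G) : ℕ :=
  ((fun x => subConjClass H x) '' X).ncard

section

open Subgroup
open scoped commutatorElement

variable {G : Type*} [Group G]

lemma subConjClass_eq_singleton {H : Subgroup G} {b : G} (hH : ∀ h ∈ H, Commute h b) :
    subConjClass H b = {b} := by
  ext x
  simp only [subConjClass, Set.mem_image, SetLike.mem_coe, Set.mem_singleton_iff]
  constructor
  · rintro ⟨h, hh, rfl⟩
    rw [mul_assoc, ← (hH h hh).eq, inv_mul_cancel_left]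
  · rintro rfl
    exact ⟨1, H.one_mem, by group⟩

lemma etaIn_of_subset_center (H : Subgroup G) {X : Set G} (hX : X ⊆ center G) :
    etaIn H X = X.ncard := by
  have hclass : Set.EqOn (subConjClass H) singleton X := fun z hz =>
    subConjClass_eq_singleton fun h _ => mem_center_iff.mp (hX hz) h
  rw [etaIn, Set.image_congr hclass, Set.ncard_image_of_injective _ Set.singleton_injective]

lemma smul_center_mul_smul_center (b c : G) :
    b • (center G : Set G) * c • (center G : Set G) = (b * c) • (center G : Set G) := by
  ext x
  simp only [Set.mem_mul, Set.mem_smul_set, SetLike.mem_coe, smul_eq_mul]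
  constructor
  · rintro ⟨_, ⟨z, hz, rfl⟩, _, ⟨w, hw, rfl⟩, rfl⟩
    refine ⟨z * w, mul_mem hz hw, ?_⟩
    rw [mul_assoc, mul_assoc, ← mul_assoc c, mem_center_iff.mp hz c, mul_assoc z]
  · rintro ⟨z, hz, rfl⟩
    exact ⟨b, ⟨1, one_mem _, mul_one b⟩, c * z, ⟨z, hz, rfl⟩, (mul_assoc b c z).symm⟩

section CentralCommutators

variable (hG : commutator G ≤ center G)

def commutatorLeftHom (c : G) : G →* center G where
  toFun g := ⟨⁅c, g⁆, hG (commutator_mem_commutator (mem_top c) (mem_top g))⟩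
  map_one' := Subtype.ext (commutatorElement_one_right c)
  map_mul' g h := by
    have hch : ⁅c, h⁆ ∈ center G := hG (commutator_mem_commutator (mem_top c) (mem_top h))
    apply Subtype.ext
    calc ⁅c, g * h⁆ = ⁅c, g⁆ * (g * ⁅c, h⁆ * g⁻¹) := by group
      _ = ⁅c, g⁆ * ⁅c, h⁆ := by rw [mem_center_iff.mp hch g, mul_inv_cancel_right]

include hG in
lemma commutatorLeftHom_surjective (hZ : (Nat.card (center G)).Prime) {c : G}
    (hc : c ∉ center G) : Function.Surjective (commutatorLeftHom hG c) := by
  have : Fact (Nat.card (center G)).Prime := ⟨hZ⟩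
  rw [← MonoidHom.range_eq_top]
  refine (eq_bot_or_eq_top_of_prime_card _).resolve_left fun hbot => hc ?_
  refine mem_center_iff.mpr fun g => (commutatorElement_eq_one_iff_mul_comm.mp ?_).symm
  have hg : commutatorLeftHom hG c g ∈ (commutatorLeftHom hG c).range := ⟨g, rfl⟩
  rw [hbot, mem_bot] at hg
  exact congrArg Subtype.val hg

include hG in
lemma subConjClass_top_eq_smul_center (hZ : (Nat.card (center G)).Prime) {b : G}
    (hb : b ∉ center G) : subConjClass ⊤ b = b • (center G : Set G) := by
  have hconj (g : G) : g⁻¹ * b * g = b * ⁅b⁻¹, g⁻¹⁆ := by group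
  ext x
  simp only [subConjClass, Set.mem_image, coe_top, Set.mem_univ, true_and,
    Set.mem_smul_set, SetLike.mem_coe, smul_eq_mul]
  constructor
  · rintro ⟨g, rfl⟩
    exact ⟨_, hG (commutator_mem_commutator (mem_top _) (mem_top _)), (hconj g).symm⟩
  · rintro ⟨z, hz, rfl⟩
    have hb' : b⁻¹ ∉ center G := by rwa [inv_mem_iff]
    obtain ⟨g, hg⟩ := commutatorLeftHom_surjective hG hZ hb' ⟨z, hz⟩
    refine ⟨g⁻¹, ?_⟩
    rw [hconj, inv_inv]
    exact congrArg (b * ·) (congrArg Subtype.val hg)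

end CentralCommutators

end

theorem stmt12_general {G : Type*} [Group G] (p : ℕ) (hp : p.Prime)
    (hZcomm : (Subgroup.center G : Subgroup G) = commutator G)
    (hZcard : Nat.card (Subgroup.center G) = p)
    (a : G) (ha : a ∉ Subgroup.center G) :
    etaIn (Subgroup.centralizer {a})
        (subConjClass (Subgroup.centralizer {a}) a *
          subConjClass (Subgroup.centralizer {a}) a⁻¹) = 1 ∧
      etaIn (⊤ : Subgroup G) (subConjClass ⊤ a * subConjClass ⊤ a⁻¹) = p := by
  have hcomm (h : G) (hh : h ∈ Subgroup.centralizer {a}) : Commute h a :=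
    (Subgroup.mem_centralizer_iff.mp hh a rfl).symm
  have hZ : (Nat.card (Subgroup.center G)).Prime := hZcard ▸ hp
  have ha' : a⁻¹ ∉ Subgroup.center G := by rwa [inv_mem_iff]
  constructor
  · rw [subConjClass_eq_singleton hcomm,
      subConjClass_eq_singleton fun h hh => (hcomm h hh).inv_right,
      Set.singleton_mul_singleton, mul_inv_cancel,
      etaIn_of_subset_center _ (Set.singleton_subset_iff.mpr (Subgroup.one_mem _)),
      Set.ncard_singleton]
  · rw [subConjClass_top_eq_smul_center hZcomm.ge hZ ha,
      subConjClass_top_eq_smul_center hZcomm.ge hZ ha', smul_center_mul_smul_center,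
      mul_inv_cancel, one_smul, etaIn_of_subset_center _ subset_rfl,
      ← Nat.card_coe_set_eq, SetLike.coe_sort_coe, hZcard]

/-- for `G` extraspecial of exponent `p` and order `p³` (`p` an odd prime),
`a ∈ G \ Z(G)` and `H = C_G(a)`, one has `η(a^H (a⁻¹)^H) = 1` (counting `H`-classes)
while `η(a^G (a⁻¹)^G) = p` (counting `G`-classes); in particular for a subgroup `H` with
`C_G(a) ⊆ H ⊆ G` we need not have `η(a^G (a⁻¹)^G) ≤ η(a^H (a⁻¹)^H)`. -/
theorem stmt12 {G : Type*} [Group G] [Fintype G] (p : ℕ) (hp : p.Prime) (hodd : Odd p)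
    (hcard : Fintype.card G = p ^ 3) (hexp : ∀ g : G, g ^ p = 1)
    (hZcomm : (Subgroup.center G : Subgroup G) = commutator G)
    (hZfrat : (Subgroup.center G : Subgroup G) = frattini G)
    (hZcard : Nat.card (Subgroup.center G) = p)
    (a : G) (ha : a ∉ Subgroup.center G) :
    etaIn (Subgroup.centralizer {a})
        (subConjClass (Subgroup.centralizer {a}) a *
          subConjClass (Subgroup.centralizer {a}) a⁻¹) = 1 ∧
      etaIn (⊤ : Subgroup G) (subConjClass ⊤ a * subConjClass ⊤ a⁻¹) = p :=
  stmt12_general p hp hZcomm hZcard a ha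
end
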